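/- Let X be any random variable taking values in [d] and let ε ≥ 0. Then the coordinates (Z₁,…,Z_d) of the unary-encoding privatization Z of X with parameter ε form a negatively associated collection of random variables. -/

import Mathlib

/-!
With the coins `sⱼ = 1{Vⱼ ≤ c}`, independent of `X` and with bias `c = e^{ε/2}/(e^{ε/2}+1) ≥ 1/2`,
the privatization is `Z = u(X, s)`, where `u(x, s)ₓ = sₓ` and `u(x, s)ⱼ = 1 - sⱼ` for `j ≠ x`.
Given `X = x` the coordinates of `Z` are independent, so `E[f(Z) g(Z) | X = x] = Aₓ Bₓ` with
`Aₓ = E f(u(x, s))` and `Bₓ = E g(u(x, s))`. Put `A₀ = E f(1 - s)`. If `x ∉ I₁`, then `f` does not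
see coordinate `x` and `Aₓ = A₀`; and always `A₀ ≤ Aₓ`, because `u(x, s)` only replaces `1 - sₓ`
by the stochastically larger `sₓ`. The same holds for `g`, `I₂` and `B₀`. As `I₁ ∩ I₂ = ∅`,
`(Aₓ - A₀)(Bₓ - B₀) = 0` for every `x`, and averaging over `x` with weights `P(X = x)` gives
`E[f g] - E[f] E[g] = -(Ā - A₀)(B̄ - B₀) ≤ 0`.
-/

open MeasureTheory ProbabilityTheory

noncomputable section

/-- Negative association of a finite collection of real random variables:
for all disjoint index sets covering `[n]` and all coordinatewise non-decreasing functions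
`f`, `g` depending only on the respective index sets (whose relevant integrals exist),
`E[f·g] ≤ E[f]·E[g]`. -/
def NegAssoc {Ω : Type*} [MeasurableSpace Ω] (P : Measure Ω) {n : ℕ}
    (X : Fin n → Ω → ℝ) : Prop :=
  ∀ I₁ I₂ : Finset (Fin n), Disjoint I₁ I₂ → I₁ ∪ I₂ = Finset.univ →
    ∀ f g : (Fin n → ℝ) → ℝ, Monotone f → Monotone g →
      (∀ x y : Fin n → ℝ, (∀ i ∈ I₁, x i = y i) → f x = f y) →
      (∀ x y : Fin n → ℝ, (∀ i ∈ I₂, x i = y i) → g x = g y) →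
      Integrable (fun ω => f (fun i => X i ω)) P →
      Integrable (fun ω => g (fun i => X i ω)) P →
      Integrable (fun ω => f (fun i => X i ω) * g (fun i => X i ω)) P →
      ∫ ω, f (fun i => X i ω) * g (fun i => X i ω) ∂P ≤
        (∫ ω, f (fun i => X i ω) ∂P) * ∫ ω, g (fun i => X i ω) ∂P

/-- The unary-encoding randomization function. -/
def ueR {d : ℕ} (ε : ℝ) (x j : Fin d) (u : ℝ) : ℝ :=
  if u ≤ Real.exp (ε / 2) / (Real.exp (ε / 2) + 1) then (if x = j then 1 else 0)
  else (if x = j then 0 else 1)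

/-- The datum together with the auxiliary uniform variables, as one family. -/
def ueFam {Ω : Type*} {d : ℕ} (X : Ω → Fin d) (V : Fin d → Ω → ℝ) :
    (i : Sum Unit (Fin d)) → Ω → Sum.elim (fun _ => Fin d) (fun _ => ℝ) i
  | Sum.inl _ => X
  | Sum.inr j => V j

/-- Measurable space structures for `ueFam`. -/
def ueFamMS {d : ℕ} :
    (i : Sum Unit (Fin d)) → MeasurableSpace (Sum.elim (fun _ => Fin d) (fun _ => ℝ) i)
  | Sum.inl _ => (inferInstance : MeasurableSpace (Fin d))
  | Sum.inr _ => (inferInstance : MeasurableSpace ℝ)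

section Independence

variable {Ω : Type*} [MeasurableSpace Ω] {P : Measure Ω}

lemma Measurable.integrable_comp_of_finite [IsFiniteMeasure P] {α : Type*} [Finite α]
    [MeasurableSpace α] [MeasurableSingletonClass α] {T : Ω → α} (hT : Measurable T)
    (h : α → ℝ) : Integrable (fun ω => h (T ω)) P :=
  Integrable.of_finite.comp_measurable hT

lemma ProbabilityTheory.iIndepFun.indepFun_comp_of_dependsOn {ι β : Type*} [MeasurableSpace β]
    [Countable β] [MeasurableSingletonClass β] {S : Ω → ι → β}
    (hS : iIndepFun (fun i ω => S ω i) P) (hmS : ∀ i, Measurable fun ω => S ω i)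
    {I J : Finset ι} (hIJ : Disjoint I J) {h₁ h₂ : (ι → β) → ℝ}
    (hh₁ : DependsOn h₁ I) (hh₂ : DependsOn h₂ J) :
    IndepFun (fun ω => h₁ (S ω)) (fun ω => h₂ (S ω)) P := by
  obtain ⟨g₁, rfl⟩ := dependsOn_iff_exists_comp.mp hh₁
  obtain ⟨g₂, rfl⟩ := dependsOn_iff_exists_comp.mp hh₂
  exact (hS.indepFun_finset I J hIJ hmS).comp (measurable_of_countable g₁)
    (measurable_of_countable g₂)

lemma ProbabilityTheory.IndepFun.integral_eq_sum_mul_integral [IsFiniteMeasure P]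
    {α β : Type*} [Fintype α] [MeasurableSpace α] [MeasurableSingletonClass α] [MeasurableSpace β]
    {X : Ω → α} {Y : Ω → β} (hXY : IndepFun X Y P) (hX : Measurable X)
    {h : α → β → ℝ} (hh : ∀ a, Measurable (h a))
    (hint : ∀ a, Integrable (fun ω => h a (Y ω)) P) :
    ∫ ω, h (X ω) (Y ω) ∂P = ∑ a, P.real (X ⁻¹' {a}) * ∫ ω, h a (Y ω) ∂P := by
  let ind (a : α) : α → ℝ := ({a} : Set α).indicator 1
  have hind : ∀ a, Integrable (fun ω => ind a (X ω)) P := fun a =>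
    hX.integrable_comp_of_finite _
  have hindep : ∀ a, IndepFun (fun ω => ind a (X ω)) (fun ω => h a (Y ω)) P := fun a =>
    hXY.comp (measurable_one.indicator (measurableSet_singleton a)) (hh a)
  have hsplit : (fun ω => h (X ω) (Y ω)) = fun ω => ∑ a, ind a (X ω) * h a (Y ω) := by
    ext ω
    classical
    simp only [ind, Set.indicator_apply, Set.mem_singleton_iff, Pi.one_apply, ite_mul, one_mul,
      zero_mul, Finset.sum_ite_eq, Finset.mem_univ, if_true]
  have hint_mul (a : α) : Integrable (fun ω => ind a (X ω) * h a (Y ω)) P :=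
    (hindep a).integrable_mul (hind a) (hint a)
  rw [hsplit, integral_finsetSum _ fun a _ => hint_mul a]
  refine Finset.sum_congr rfl fun a _ => ?_
  rw [(hindep a).integral_fun_mul_eq_mul_integral (hind a).aestronglyMeasurable
    (hint a).aestronglyMeasurable, ← integral_indicator_one (hX (measurableSet_singleton a))]
  rfl

lemma Measurable.sum_measureReal_preimage_singleton_eq_one [IsProbabilityMeasure P] {α : Type*}
    [Fintype α] [MeasurableSpace α] [MeasurableSingletonClass α] {X : Ω → α} (hX : Measurable X) :
    ∑ a, P.real (X ⁻¹' {a}) = 1 := by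
  rw [sum_measureReal_preimage_singleton _ fun a _ => hX (measurableSet_singleton a)]
  simp

end Independence

lemma Finset.sum_mul_mul_le_sum_mul_mul_sum {ι : Type*} (s : Finset ι) {p a b : ι → ℝ}
    {a₀ b₀ : ℝ} (hp : ∀ i ∈ s, 0 ≤ p i) (hp₁ : ∑ i ∈ s, p i = 1) (ha : ∀ i ∈ s, a₀ ≤ a i)
    (hb : ∀ i ∈ s, b₀ ≤ b i) (hab : ∀ i ∈ s, a i = a₀ ∨ b i = b₀) :
    ∑ i ∈ s, p i * (a i * b i) ≤ (∑ i ∈ s, p i * a i) * ∑ i ∈ s, p i * b i := by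
  have hprod : ∑ i ∈ s, p i * (a i * b i)
      = a₀ * ∑ i ∈ s, p i * b i + b₀ * ∑ i ∈ s, p i * a i - a₀ * b₀ := by
    have hi : ∀ i ∈ s,
        p i * (a i * b i) = a₀ * (p i * b i) + b₀ * (p i * a i) - a₀ * b₀ * p i := by
      intro i hi
      rcases hab i hi with h | h <;> rw [h] <;> ring
    rw [Finset.sum_congr rfl hi, Finset.sum_sub_distrib, Finset.sum_add_distrib,
      ← Finset.mul_sum, ← Finset.mul_sum, ← Finset.mul_sum, hp₁, mul_one]
  have hmean : ∀ {c : ι → ℝ} {c₀ : ℝ}, (∀ i ∈ s, c₀ ≤ c i) → c₀ ≤ ∑ i ∈ s, p i * c i := by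
    intro c c₀ hc
    calc c₀ = ∑ i ∈ s, p i * c₀ := by rw [← Finset.sum_mul, hp₁, one_mul]
      _ ≤ ∑ i ∈ s, p i * c i :=
        Finset.sum_le_sum fun i hi => mul_le_mul_of_nonneg_left (hc i hi) (hp i hi)
  nlinarith [mul_nonneg (sub_nonneg.mpr (hmean ha)) (sub_nonneg.mpr (hmean hb))]

def boolToReal (b : Bool) : ℝ := if b then 1 else 0

lemma boolToReal_not (b : Bool) : boolToReal (!b) = 1 - boolToReal b := by
  cases b <;> simp [boolToReal]

section UnaryEncoding

variable {ι : Type*} [DecidableEq ι]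

def flipVec (s : ι → Bool) : ι → ℝ := fun j => boolToReal (!s j)

/-- The unary encoding of `x` when the coin `s j` decides whether bit `j` is reported truthfully. -/
def ueVec (x : ι) (s : ι → Bool) : ι → ℝ := Function.update (flipVec s) x (boolToReal (s x))

lemma DependsOn.comp_ueVec {h : (ι → ℝ) → ℝ} {I : Set ι} (hh : DependsOn h I) (x : ι) :
    DependsOn (fun s => h (ueVec x s)) I := fun s t hst =>
  hh fun j hj => by
    simp only [ueVec, Function.update_apply, flipVec]
    split_ifs with hjx
    · rw [← hjx, hst j hj]
    · rw [hst j hj]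

lemma DependsOn.apply_ueVec_of_notMem {h : (ι → ℝ) → ℝ} {I : Set ι} (hh : DependsOn h I)
    {x : ι} (hx : x ∉ I) (s : ι → Bool) : h (ueVec x s) = h (flipVec s) :=
  hh fun _ hj => Function.update_of_ne (ne_of_mem_of_not_mem hj hx) _ _

variable [Fintype ι] {Ω : Type*} [MeasurableSpace Ω] {P : Measure Ω} {S : Ω → ι → Bool}

/-- `h (ueVec x s) - h (flipVec s)` factors as `(s x - (1 - s x))` times the increment of `h` in
coordinate `x`; the increment is nonnegative and independent of the coin `s x`. -/
lemma integral_comp_flipVec_le_integral_comp_ueVec [IsFiniteMeasure P]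
    (hS : iIndepFun (fun i ω => S ω i) P) (hmS : ∀ i, Measurable fun ω => S ω i)
    {h : (ι → ℝ) → ℝ} (hh : Monotone h) (x : ι)
    (hx : ∫ ω, boolToReal (!S ω x) ∂P ≤ ∫ ω, boolToReal (S ω x) ∂P) :
    ∫ ω, h (flipVec (S ω)) ∂P ≤ ∫ ω, h (ueVec x (S ω)) ∂P := by
  have hint (k : (ι → Bool) → ℝ) : Integrable (fun ω => k (S ω)) P :=
    (measurable_pi_lambda _ hmS).integrable_comp_of_finite k
  let jump (s : ι → Bool) : ℝ :=
    h (Function.update (flipVec s) x 1) - h (Function.update (flipVec s) x 0)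
  let bias (s : ι → Bool) : ℝ := boolToReal (s x) - boolToReal (!s x)
  have hjump : ∀ s, 0 ≤ jump s := fun s => sub_nonneg.mpr (hh (Function.update_mono zero_le_one))
  have hdiff : ∀ s, h (ueVec x s) - h (flipVec s) = bias s * jump s := by
    intro s
    conv_lhs => rw [← Function.update_eq_self x (flipVec s)]
    cases hs : s x <;> simp [ueVec, jump, bias, flipVec, hs, boolToReal]
  have hindep : IndepFun (fun ω => bias (S ω)) (fun ω => jump (S ω)) P := by
    refine hS.indepFun_comp_of_dependsOn hmS (Finset.disjoint_singleton_left.mpr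
      (Finset.notMem_erase x Finset.univ)) (fun s t hst => ?_) (fun s t hst => ?_)
    · simp [bias, hst x (by simp)]
    · have hupd : ∀ r, Function.update (flipVec s) x r = Function.update (flipVec t) x r := by
        intro r
        ext j
        by_cases hjx : j = x
        · simp [hjx]
        · simp [Function.update_of_ne hjx, flipVec, hst j (by simp [hjx])]
      simp only [jump, hupd]
  rw [← sub_nonneg, ← integral_sub (hint fun s => h (ueVec x s)) (hint fun s => h (flipVec s))]
  simp_rw [hdiff]
  rw [hindep.integral_fun_mul_eq_mul_integral (hint bias).aestronglyMeasurable
    (hint jump).aestronglyMeasurable]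
  refine mul_nonneg ?_ (integral_nonneg fun ω => hjump _)
  change 0 ≤ ∫ ω, boolToReal (S ω x) - boolToReal (!S ω x) ∂P
  rw [integral_sub (hint fun s => boolToReal (s x)) (hint fun s => boolToReal (!s x))]
  exact sub_nonneg.mpr hx

end UnaryEncoding

section NegAssoc

variable {Ω : Type*} [MeasurableSpace Ω] {P : Measure Ω} [IsProbabilityMeasure P] {d : ℕ}

theorem negAssoc_ueVec {X : Ω → Fin d} {S : Ω → Fin d → Bool} (hX : Measurable X)
    (hmS : ∀ j, Measurable fun ω => S ω j) (hXS : IndepFun X S P)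
    (hS : iIndepFun (fun j ω => S ω j) P)
    (hbias : ∀ j, ∫ ω, boolToReal (!S ω j) ∂P ≤ ∫ ω, boolToReal (S ω j) ∂P) :
    NegAssoc P (fun j ω => ueVec (X ω) (S ω) j) := by
  intro I₁ I₂ hdisj _ f g hf hg hfI hgI _ _ _
  replace hfI : DependsOn f I₁ := fun s t hst => hfI s t hst
  replace hgI : DependsOn g I₂ := fun s t hst => hgI s t hst
  have hint (k : (Fin d → Bool) → ℝ) : Integrable (fun ω => k (S ω)) P :=
    (measurable_pi_lambda _ hmS).integrable_comp_of_finite k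
  have hcond (k : (Fin d → ℝ) → ℝ) : ∫ ω, k (ueVec (X ω) (S ω)) ∂P
      = ∑ x, P.real (X ⁻¹' {x}) * ∫ ω, k (ueVec x (S ω)) ∂P :=
    hXS.integral_eq_sum_mul_integral hX (h := fun x s => k (ueVec x s))
      (fun _ => measurable_of_finite _) fun x => hint fun s => k (ueVec x s)
  have hsplit (x : Fin d) : ∫ ω, f (ueVec x (S ω)) * g (ueVec x (S ω)) ∂P
      = (∫ ω, f (ueVec x (S ω)) ∂P) * ∫ ω, g (ueVec x (S ω)) ∂P :=
    (hS.indepFun_comp_of_dependsOn hmS hdisj (hfI.comp_ueVec x)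
      (hgI.comp_ueVec x)).integral_fun_mul_eq_mul_integral
      (hint fun s => f (ueVec x s)).aestronglyMeasurable
      (hint fun s => g (ueVec x s)).aestronglyMeasurable
  have hoff (x : Fin d) : (∫ ω, f (ueVec x (S ω)) ∂P) = ∫ ω, f (flipVec (S ω)) ∂P ∨
      (∫ ω, g (ueVec x (S ω)) ∂P) = ∫ ω, g (flipVec (S ω)) ∂P := by
    by_cases hx : x ∈ I₁
    · right
      simp_rw [hgI.apply_ueVec_of_notMem (Finset.disjoint_left.mp hdisj hx)]
    · left
      simp_rw [hfI.apply_ueVec_of_notMem hx]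
  change ∫ ω, f (ueVec (X ω) (S ω)) * g (ueVec (X ω) (S ω)) ∂P
    ≤ (∫ ω, f (ueVec (X ω) (S ω)) ∂P) * ∫ ω, g (ueVec (X ω) (S ω)) ∂P
  rw [hcond f, hcond g, hcond fun v => f v * g v]
  simp_rw [hsplit]
  exact Finset.sum_mul_mul_le_sum_mul_mul_sum _ (fun _ _ => measureReal_nonneg)
    hX.sum_measureReal_preimage_singleton_eq_one
    (fun x _ => integral_comp_flipVec_le_integral_comp_ueVec hS hmS hf x (hbias x))
    (fun x _ => integral_comp_flipVec_le_integral_comp_ueVec hS hmS hg x (hbias x))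
    fun x _ => hoff x

end NegAssoc

lemma Real.exp_div_exp_add_one_eq_sigmoid (t : ℝ) :
    Real.exp t / (Real.exp t + 1) = Real.sigmoid t := by
  rw [Real.sigmoid_def, Real.exp_neg]
  field_simp

lemma measurable_decide_le (c : ℝ) : Measurable fun u : ℝ => decide (u ≤ c) :=
  measurable_to_bool <| by
    rw [show (fun u : ℝ => decide (u ≤ c)) ⁻¹' {true} = Set.Iic c by ext; simp]
    exact measurableSet_Iic

section Uniform

variable {Ω : Type*} [MeasurableSpace Ω] {P : Measure Ω} {V : Ω → ℝ}

lemma integral_boolToReal_decide_le (hV : Measurable V)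
    (hunif : P.map V = volume.restrict (Set.Icc 0 1)) {c : ℝ} (hc₀ : 0 ≤ c) (hc₁ : c ≤ 1) :
    ∫ ω, boolToReal (decide (V ω ≤ c)) ∂P = c := by
  have hind : (fun u : ℝ => boolToReal (decide (u ≤ c))) = (Set.Iic c).indicator 1 := by
    ext u
    by_cases hu : u ≤ c <;> simp [boolToReal, hu]
  have hIcc : Set.Iic c ∩ Set.Icc 0 1 = Set.Icc 0 c := Set.ext fun u => by
    simp only [Set.mem_inter_iff, Set.mem_Iic, Set.mem_Icc]
    exact ⟨fun h => ⟨h.2.1, h.1⟩, fun h => ⟨h.2, h.1, h.2.trans hc₁⟩⟩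
  rw [← integral_map (f := fun u : ℝ => boolToReal (decide (u ≤ c))) hV.aemeasurable
    ((measurable_of_countable boolToReal).comp (measurable_decide_le c)).aestronglyMeasurable,
    hunif, hind, integral_indicator_one measurableSet_Iic,
    measureReal_restrict_apply measurableSet_Iic, hIcc, Real.volume_real_Icc_of_le hc₀, sub_zero]

lemma integral_boolToReal_not_decide_le_le_integral [IsProbabilityMeasure P] (hV : Measurable V)
    (hunif : P.map V = volume.restrict (Set.Icc 0 1)) {c : ℝ} (hc : 1 / 2 ≤ c) (hc₁ : c ≤ 1) :
    ∫ ω, boolToReal (!decide (V ω ≤ c)) ∂P ≤ ∫ ω, boolToReal (decide (V ω ≤ c)) ∂P := by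
  have hint : Integrable (fun ω => boolToReal (decide (V ω ≤ c))) P :=
    ((measurable_decide_le c).comp hV).integrable_comp_of_finite _
  simp_rw [boolToReal_not]
  rw [integral_sub (integrable_const 1) hint,
    integral_boolToReal_decide_le hV hunif (by linarith) hc₁]
  simp
  linarith

end Uniform

section UeFam

variable {Ω : Type*} [MeasurableSpace Ω] {P : Measure Ω} {d : ℕ} {X : Ω → Fin d}
  {V : Fin d → Ω → ℝ}

lemma iIndepFun_of_iIndepFun_ueFam (h : iIndepFun (m := ueFamMS) (ueFam X V) P) :
    iIndepFun V P :=
  (h.precomp Sum.inr_injective :)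

lemma indepFun_of_iIndepFun_ueFam (hX : Measurable X) (hV : ∀ j, Measurable (V j))
    (h : iIndepFun (m := ueFamMS) (ueFam X V) P) :
    IndepFun X (fun ω j => V j ω) P := by
  let _ : ∀ i, MeasurableSpace (Sum.elim (fun _ => Fin d) (fun _ => ℝ) i) := ueFamMS
  have hmeas : ∀ i, Measurable[_, ueFamMS i] (ueFam X V i)
    | .inl _ => hX
    | .inr j => hV j
  have hφ : Measurable fun t : (i : ({.inl ()} : Finset (Unit ⊕ Fin d))) →
      Sum.elim (fun _ => Fin d) (fun _ => ℝ) i.1 => (t ⟨.inl (), by simp⟩ : Fin d) :=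
    measurable_pi_apply _
  have hψ : Measurable fun t : (i : (Finset.univ.image .inr : Finset (Unit ⊕ Fin d))) →
      Sum.elim (fun _ => Fin d) (fun _ => ℝ) i.1 => fun j => (t ⟨.inr j, by simp⟩ : ℝ) :=
    measurable_pi_lambda _ fun j => measurable_pi_apply _
  exact (h.indepFun_finset {.inl ()} (Finset.univ.image .inr) (by simp) hmeas).comp hφ hψ

end UeFam

/-- the coordinates of the unary-encoding privatization of any random datum
in `[d]` are negatively associated. -/
theorem stmt_12 (Ω : Type) (_ : MeasurableSpace Ω) (P : Measure Ω) [IsProbabilityMeasure P]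
    (d : ℕ) (ε : ℝ) (hε : 0 ≤ ε)
    (X : Ω → Fin d) (V : Fin d → Ω → ℝ)
    (hmX : Measurable X) (hmV : ∀ j, Measurable (V j))
    (hindep : iIndepFun (m := ueFamMS) (ueFam X V) P)
    (hunif : ∀ j, Measure.map (V j) P = volume.restrict (Set.Icc (0 : ℝ) 1)) :
    NegAssoc P (fun j ω => ueR ε (X ω) j (V j ω)) := by
  set c := Real.exp (ε / 2) / (Real.exp (ε / 2) + 1) with hc
  have hc_half : 1 / 2 ≤ c := by
    rw [hc, Real.exp_div_exp_add_one_eq_sigmoid, one_div, ← Real.sigmoid_zero]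
    exact Real.sigmoid_le (by positivity)
  have hc_one : c ≤ 1 := hc ▸ Real.exp_div_exp_add_one_eq_sigmoid _ ▸ Real.sigmoid_le_one _
  let S : Ω → Fin d → Bool := fun ω j => decide (V j ω ≤ c)
  have hZ : (fun j ω => ueR ε (X ω) j (V j ω)) = fun j ω => ueVec (X ω) (S ω) j := by
    ext j ω
    by_cases hj : j = X ω <;> by_cases hV : V j ω ≤ c <;>
      simp [ueR, ueVec, flipVec, boolToReal, S, hj, hV, ← hc, Ne.symm]
  rw [hZ]
  exact negAssoc_ueVec hmX (fun j => (measurable_decide_le c).comp (hmV j))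
    ((indepFun_of_iIndepFun_ueFam hmX hmV hindep).comp measurable_id
      (measurable_pi_lambda _ fun j => (measurable_decide_le c).comp (measurable_pi_apply j)))
    ((iIndepFun_of_iIndepFun_ueFam hindep).comp _ fun _ => measurable_decide_le c)
    fun j => integral_boolToReal_not_decide_le_le_integral (hmV j) (hunif j) hc_half hc_one
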